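/- (i) If v₁, v₂, v₃, v₄ ∈ ℝ³ are four vectors any three of which are linearly independent, and X is a 3×3 real matrix such that X vₖ lies in the span of vₖ for each k = 1, 2, 3, 4, then X is a scalar multiple of the identity matrix. (ii) Consequently, if an affine realization (p, l) of an incidence geometry (P, L, I) has four points i₁, i₂, i₃, i₄ ∈ P such that any three of the homogenizations p̂(i₁), p̂(i₂), p̂(i₃), p̂(i₄) are linearly independent, then the space of trivial infinitesimal motions of (p, l) has dimension exactly 8. -/

import Mathlib

open Matrix

/-- Homogenization: `(v₁, v₂) ↦ (v₁, v₂, 1)`. -/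
def hat (v : Fin 2 → ℝ) : Fin 3 → ℝ := Fin.snoc v 1

/-- An affine realization of the incidence geometry `(P, L, I)`:
`l j ⬝ p i + 1 = 0` for every incidence `(i, j)`. -/
def IsAffRealization {P L : Type*} (I : Set (P × L))
    (p : P → Fin 2 → ℝ) (l : L → Fin 2 → ℝ) : Prop :=
  ∀ ij ∈ I, l ij.2 ⬝ᵥ p ij.1 + 1 = 0

/-- A trivial infinitesimal motion: the linearization of a projective transformation,
given by a `3 × 3` matrix `X`. -/
def IsTrivMotion {P L : Type*}
    (p : P → Fin 2 → ℝ) (l : L → Fin 2 → ℝ)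
    (dp : P → Fin 2 → ℝ) (dl : L → Fin 2 → ℝ) : Prop :=
  ∃ X : Matrix (Fin 3) (Fin 3) ℝ,
    (∀ i, dp i = Fin.init (X *ᵥ hat (p i)) - (X *ᵥ hat (p i)) 2 • p i) ∧
    (∀ j, dl j = -(Fin.init (Xᵀ *ᵥ hat (l j))) + (Xᵀ *ᵥ hat (l j)) 2 • l j)

/-!
A matrix `X` fixing the lines spanned by four vectors in general position in a `3`-space is
scalar: writing the fourth vector in the basis of the other three, all its coordinates are
nonzero (a zero coordinate would make it dependent on two of the others), and comparing the coordinates of `X v₄ = d v₄` forces every eigenvalue to equal `d`.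

For (ii), `X ↦ (ṗ, l̇)` is linear on the `9`-dimensional space of `3 × 3` matrices and its
range is the space of trivial motions. A matrix in its kernel has every `p̂ i` as an
eigenvector, so by (i) the kernel is the line of scalar matrices, and the range has
dimension `9 - 1 = 8`.
-/

open Module Submodule

def ThreeWiseLinearIndependent (K : Type*) {V ι : Type*} [Field K] [AddCommGroup V]
    [Module K V] (v : ι → V) : Prop :=
  ∀ k₁ k₂ k₃ : ι, k₁ ≠ k₂ → k₁ ≠ k₃ → k₂ ≠ k₃ → LinearIndependent K ![v k₁, v k₂, v k₃]

section
variable {K V ι : Type*} [Field K] [AddCommGroup V] [Module K V]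

theorem Module.Basis.repr_ne_zero_of_linearIndependent_update [DecidableEq ι]
    (b : Basis ι K V) {u : V} {i : ι} (h : LinearIndependent K (Function.update b i u)) :
    b.repr u i ≠ 0 := by
  intro hi
  have hspan : u ∈ span K (b '' {i}ᶜ) :=
    b.mem_span_image.2 fun j hj (hji : j = i) => (Finsupp.mem_support_iff.1 hj) (hji ▸ hi)
  have himage : Function.update b i u '' {i}ᶜ = b '' {i}ᶜ :=
    Set.image_congr fun j hj => Function.update_of_ne hj _ _
  simpa [himage, hspan] using h.notMem_span_image (s := {i}ᶜ) (x := i) (by simp)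

theorem Module.End.eq_smul_one_of_basis_eigenvectors [Fintype ι] (b : Basis ι K V)
    {f : Module.End K V} {c : ι → K} (hb : ∀ i, f (b i) = c i • b i) {u : V} {d : K}
    (hu : f u = d • u) (hsupp : ∀ i, b.repr u i ≠ 0) : f = d • 1 := by
  have hc : c = fun _ => d := by
    have hfu : f u = ∑ i, (b.repr u i * c i) • b i := by
      conv_lhs => rw [← b.sum_repr u]
      simp only [map_sum, map_smul, hb, smul_smul]
    ext i
    have := congrArg (fun w => b.repr w i) hu
    simp only [hfu, b.repr_sum_self, map_smul, Finsupp.smul_apply, smul_eq_mul] at this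
    exact mul_left_cancel₀ (hsupp i) (this.trans (mul_comm _ _))
  exact b.ext fun i => by simp [hb, hc]

theorem Module.End.exists_eq_smul_one_of_four_eigenvectors [FiniteDimensional K V]
    (hV : finrank K V = 3) {v : Fin 4 → V} (hv : ThreeWiseLinearIndependent K v)
    {f : Module.End K V} (hf : ∀ k, ∃ c : K, f (v k) = c • v k) : ∃ c : K, f = c • 1 := by
  choose c hc using hf
  have h012 := hv 0 1 2 (by decide) (by decide) (by decide)
  have hcard : Fintype.card (Fin 3) = finrank K V := by simp [hV]
  let b := basisOfLinearIndependentOfCardEqFinrank h012 hcard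
  have hb : ⇑b = ![v 0, v 1, v 2] := coe_basisOfLinearIndependentOfCardEqFinrank h012 hcard
  refine ⟨c 3, eq_smul_one_of_basis_eigenvectors b (c := ![c 0, c 1, c 2]) ?_ (hc 3) ?_⟩
  · intro i; fin_cases i <;> simp [hb, hc]
  · intro i
    apply b.repr_ne_zero_of_linearIndependent_update
    fin_cases i
    · convert hv 3 1 2 (by decide) (by decide) (by decide) using 1
      ext j; fin_cases j <;> simp [hb]
    · convert hv 0 3 2 (by decide) (by decide) (by decide) using 1
      ext j; fin_cases j <;> simp [hb]
    · convert hv 0 1 3 (by decide) (by decide) (by decide) using 1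
      ext j; fin_cases j <;> simp [hb]

theorem Matrix.exists_eq_smul_one_of_four_eigenvectors {v : Fin 4 → Fin 3 → K}
    (hv : ThreeWiseLinearIndependent K v) {X : Matrix (Fin 3) (Fin 3) K}
    (hX : ∀ k, ∃ c : K, X *ᵥ v k = c • v k) : ∃ c : K, X = c • 1 := by
  obtain ⟨c, hc⟩ := Module.End.exists_eq_smul_one_of_four_eigenvectors (by simp) hv
    (f := toLin' X) hX
  exact ⟨c, toLin'.injective (by simp [hc, Module.End.one_eq_id])⟩

end

theorem hat_two (w : Fin 2 → ℝ) : hat w 2 = 1 := Fin.snoc_last (α := fun _ => ℝ) _ _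

theorem hat_castSucc (w : Fin 2 → ℝ) (k : Fin 2) : hat w k.castSucc = w k :=
  Fin.snoc_castSucc (α := fun _ => ℝ) _ _ _

theorem init_sub_smul_eq_zero_iff (u : Fin 3 → ℝ) (w : Fin 2 → ℝ) :
    Fin.init u - u 2 • w = 0 ↔ u = u 2 • hat w := by
  rw [sub_eq_zero, funext_iff, funext_iff, Fin.forall_fin_succ' (n := 2)]
  simp [Fin.init, hat_castSucc, hat_two]

noncomputable def pointVelocity (w : Fin 2 → ℝ) : Matrix (Fin 3) (Fin 3) ℝ →ₗ[ℝ] Fin 2 → ℝ where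
  toFun X := Fin.init (X *ᵥ hat w) - (X *ᵥ hat w) 2 • w
  map_add' X Y := by ext k; simp [add_mulVec, Fin.init]; ring
  map_smul' c X := by ext k; simp [smul_mulVec, Fin.init]; ring

theorem pointVelocity_apply (w : Fin 2 → ℝ) (X : Matrix (Fin 3) (Fin 3) ℝ) :
    pointVelocity w X = Fin.init (X *ᵥ hat w) - (X *ᵥ hat w) 2 • w := rfl

theorem pointVelocity_neg_apply (w : Fin 2 → ℝ) (X : Matrix (Fin 3) (Fin 3) ℝ) :
    pointVelocity w (-X) = -Fin.init (X *ᵥ hat w) + (X *ᵥ hat w) 2 • w := by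
  rw [map_neg, pointVelocity_apply, neg_sub, sub_eq_neg_add]

theorem pointVelocity_eq_zero_iff (w : Fin 2 → ℝ) (X : Matrix (Fin 3) (Fin 3) ℝ) :
    pointVelocity w X = 0 ↔ ∃ c : ℝ, X *ᵥ hat w = c • hat w := by
  refine ⟨fun h => ⟨_, (init_sub_smul_eq_zero_iff _ w).1 h⟩, fun ⟨c, hc⟩ => ?_⟩
  rw [pointVelocity_apply, init_sub_smul_eq_zero_iff, hc]
  simp [hat_two]

section
variable {P L : Type*} (p : P → Fin 2 → ℝ) (l : L → Fin 2 → ℝ)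

-- Lines transform contragrediently to points, so they move with the velocity of `-Xᵀ`.
noncomputable def motionMap : Matrix (Fin 3) (Fin 3) ℝ →ₗ[ℝ] (P → Fin 2 → ℝ) × (L → Fin 2 → ℝ) :=
  (LinearMap.pi fun i => pointVelocity (p i)).prod
    (LinearMap.pi fun j =>
      (pointVelocity (l j)).comp (-(transposeLinearEquiv (Fin 3) (Fin 3) ℝ ℝ).toLinearMap))

theorem motionMap_apply (X : Matrix (Fin 3) (Fin 3) ℝ) :
    motionMap p l X = (fun i => pointVelocity (p i) X, fun j => pointVelocity (l j) (-Xᵀ)) := rfl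

theorem coe_range_motionMap :
    (LinearMap.range (motionMap p l) : Set ((P → Fin 2 → ℝ) × (L → Fin 2 → ℝ))) =
      {m | IsTrivMotion p l m.1 m.2} := by
  ext ⟨dp, dl⟩
  simp only [SetLike.mem_coe, LinearMap.mem_range, motionMap_apply, pointVelocity_neg_apply]
  simp only [Prod.mk.injEq, funext_iff, pointVelocity_apply, Set.mem_ofPred_eq, IsTrivMotion,
    eq_comm]

theorem ker_motionMap {q : Fin 4 → P}
    (hq : ThreeWiseLinearIndependent ℝ fun k => hat (p (q k))) :
    LinearMap.ker (motionMap p l) = span ℝ {1} := by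
  refine le_antisymm (fun X hX => ?_) ((span_singleton_le_iff_mem _ _).2 ?_)
  · have hpoint := congrArg Prod.fst (LinearMap.mem_ker.1 hX)
    obtain ⟨c, rfl⟩ := Matrix.exists_eq_smul_one_of_four_eigenvectors hq fun k =>
      (pointVelocity_eq_zero_iff _ _).1 (congrFun hpoint (q k))
    exact smul_mem _ c (mem_span_singleton_self 1)
  · rw [LinearMap.mem_ker, motionMap_apply, transpose_one, Prod.mk_eq_zero]
    exact ⟨funext fun i => (pointVelocity_eq_zero_iff _ _).2 ⟨1, by simp⟩,
      funext fun j => (pointVelocity_eq_zero_iff _ _).2 ⟨-1, by simp [neg_mulVec]⟩⟩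

end

theorem scalar_matrix_and_trivial_motions_dim_eq_eight_general
    {P L : Type*}
    (p : P → Fin 2 → ℝ) (l : L → Fin 2 → ℝ)
    (i₁ i₂ i₃ i₄ : P)
    (hindep : ∀ k₁ k₂ k₃ : Fin 4, k₁ ≠ k₂ → k₁ ≠ k₃ → k₂ ≠ k₃ →
      LinearIndependent ℝ
        ![![hat (p i₁), hat (p i₂), hat (p i₃), hat (p i₄)] k₁,
          ![hat (p i₁), hat (p i₂), hat (p i₃), hat (p i₄)] k₂,
          ![hat (p i₁), hat (p i₂), hat (p i₃), hat (p i₄)] k₃]) :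
    (∀ (v : Fin 4 → Fin 3 → ℝ) (X : Matrix (Fin 3) (Fin 3) ℝ),
      (∀ k₁ k₂ k₃ : Fin 4, k₁ ≠ k₂ → k₁ ≠ k₃ → k₂ ≠ k₃ →
        LinearIndependent ℝ ![v k₁, v k₂, v k₃]) →
      (∀ k, ∃ c : ℝ, X *ᵥ v k = c • v k) →
      ∃ c : ℝ, X = c • (1 : Matrix (Fin 3) (Fin 3) ℝ)) ∧
    (∃ W : Submodule ℝ ((P → Fin 2 → ℝ) × (L → Fin 2 → ℝ)),
      (W : Set ((P → Fin 2 → ℝ) × (L → Fin 2 → ℝ)))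
        = {m | IsTrivMotion p l m.1 m.2} ∧
      Module.finrank ℝ W = 8) := by
  refine ⟨fun v X hv hX => Matrix.exists_eq_smul_one_of_four_eigenvectors hv hX,
    LinearMap.range (motionMap p l), coe_range_motionMap p l, ?_⟩
  have hgen : ThreeWiseLinearIndependent ℝ fun k => hat (p (![i₁, i₂, i₃, i₄] k)) := by
    have hfun : (fun k => hat (p (![i₁, i₂, i₃, i₄] k))) =
        ![hat (p i₁), hat (p i₂), hat (p i₃), hat (p i₄)] := by
      ext1 k; fin_cases k <;> rfl
    rw [hfun]
    exact hindep
  have hrank := (motionMap p l).finrank_range_add_finrank_ker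
  rw [ker_motionMap p l hgen, finrank_span_singleton one_ne_zero, finrank_matrix,
    Fintype.card_fin, finrank_self] at hrank
  omega

/-- Theorem. (i) If `v₁, v₂, v₃, v₄ ∈ ℝ³` are four vectors any three of which are
linearly independent, and `X` is a `3 × 3` real matrix with `X vₖ ∈ span {vₖ}` for
each `k`, then `X` is a scalar multiple of the identity.
(ii) Consequently, if an affine realization `(p, l)` of `(P, L, I)` has four points
whose homogenizations are three-by-three linearly independent, then the set of
trivial infinitesimal motions of `(p, l)` is a linear subspace of
`(ℝ²)^P × (ℝ²)^L` of dimension exactly `8`. -/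
theorem scalar_matrix_and_trivial_motions_dim_eq_eight
    {P L : Type*} [Fintype P] [Fintype L] (I : Set (P × L))
    (p : P → Fin 2 → ℝ) (l : L → Fin 2 → ℝ)
    (hreal : IsAffRealization I p l)
    (i₁ i₂ i₃ i₄ : P)
    (hindep : ∀ k₁ k₂ k₃ : Fin 4, k₁ ≠ k₂ → k₁ ≠ k₃ → k₂ ≠ k₃ →
      LinearIndependent ℝ
        ![![hat (p i₁), hat (p i₂), hat (p i₃), hat (p i₄)] k₁,
          ![hat (p i₁), hat (p i₂), hat (p i₃), hat (p i₄)] k₂,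
          ![hat (p i₁), hat (p i₂), hat (p i₃), hat (p i₄)] k₃]) :
    (∀ (v : Fin 4 → Fin 3 → ℝ) (X : Matrix (Fin 3) (Fin 3) ℝ),
      (∀ k₁ k₂ k₃ : Fin 4, k₁ ≠ k₂ → k₁ ≠ k₃ → k₂ ≠ k₃ →
        LinearIndependent ℝ ![v k₁, v k₂, v k₃]) →
      (∀ k, ∃ c : ℝ, X *ᵥ v k = c • v k) →
      ∃ c : ℝ, X = c • (1 : Matrix (Fin 3) (Fin 3) ℝ)) ∧
    (∃ W : Submodule ℝ ((P → Fin 2 → ℝ) × (L → Fin 2 → ℝ)),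
      (W : Set ((P → Fin 2 → ℝ) × (L → Fin 2 → ℝ)))
        = {m | IsTrivMotion p l m.1 m.2} ∧
      Module.finrank ℝ W = 8) :=
  scalar_matrix_and_trivial_motions_dim_eq_eight_general p l i₁ i₂ i₃ i₄ hindep
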